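/- Let l = r = 1 and suppose d ≥ 0, c ≥ 0 and Assumptions 1–2 hold. Then the primal projection interval Θ_P ⊆ ℝ contains at most n transition points and at most n invariancy intervals. -/

import Mathlib

/-!
For `v ∈ Θ_P`, Assumption 1 writes the cost `d + v • M` as `x - s • B` with `x ≥ 0`, so the
one-row LP defining `Ψ(v)` is dual feasible and attains its optimum, and by the usual exchange
argument `Ψ` is antitone in `v`. The feasible region `{y ≥ 0 | B y = B c}` has at most `n`
vertices `(Bc / B_k) e_k`. On an invariancy interval `Ψ` is a single vertex value, and two
invariancy intervals with the same value would merge into a longer one, so invariancy intervals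
inject into vertex indices. A transition point is charged injectively to an index: to the vertex
at the top of its optimal range of `M y`, or to an optimal ray along which `M y` is unbounded.
-/

open Matrix

/-- Assumption 1 in the case `r = 1`, with `M` a single row vector `Mv`:
the row spaces of `A`, `B` and the span of `Mv` are pairwise orthogonal
and their sum is all of `ℝⁿ`. -/
def Assumption1R {m l n : ℕ} (A : Matrix (Fin m) (Fin n) ℝ)
    (B : Matrix (Fin l) (Fin n) ℝ) (Mv : Fin n → ℝ) : Prop :=
  (∀ wa wb, (Aᵀ *ᵥ wa) ⬝ᵥ (Bᵀ *ᵥ wb) = 0) ∧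
  (∀ wa, (Aᵀ *ᵥ wa) ⬝ᵥ Mv = 0) ∧
  (∀ wb, (Bᵀ *ᵥ wb) ⬝ᵥ Mv = 0) ∧
  (LinearMap.range (Aᵀ).mulVecLin ⊔ LinearMap.range (Bᵀ).mulVecLin ⊔
      (Submodule.span ℝ {Mv}) = ⊤)

/-- Optimality for the LP `min ⟨cost, x⟩ s.t. Ax = Ad, x ≥ 0`. -/
def OptimalFor {m n : ℕ} (A : Matrix (Fin m) (Fin n) ℝ) (d cost x : Fin n → ℝ) : Prop :=
  A *ᵥ x = A *ᵥ d ∧ 0 ≤ x ∧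
    ∀ x' : Fin n → ℝ, A *ᵥ x' = A *ᵥ d → 0 ≤ x' → cost ⬝ᵥ x ≤ cost ⬝ᵥ x'

/-- The primal projection interval `Θ_P ⊆ ℝ` (case `r = 1`). -/
def ThetaPR {m n : ℕ} (A : Matrix (Fin m) (Fin n) ℝ) (Mv d : Fin n → ℝ) : Set ℝ :=
  {v | ∃ x : Fin n → ℝ, 0 ≤ x ∧ A *ᵥ x = A *ᵥ d ∧ Mv ⬝ᵥ x = Mv ⬝ᵥ d + v}

/-- The dual projection interval `Θ_D ⊆ ℝ` (case `r = 1`). -/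
def ThetaDR {l n : ℕ} (B : Matrix (Fin l) (Fin n) ℝ) (Mv c : Fin n → ℝ) : Set ℝ :=
  {u | ∃ y : Fin n → ℝ, 0 ≤ y ∧ B *ᵥ y = B *ᵥ c ∧ Mv ⬝ᵥ y = Mv ⬝ᵥ c + u}

/-- `Φ(u) ⊆ ℝ` (case `r = 1`). -/
def PhiR {m n : ℕ} (A : Matrix (Fin m) (Fin n) ℝ) (Mv c d : Fin n → ℝ) (u : ℝ) : Set ℝ :=
  {v | ∃ x : Fin n → ℝ, OptimalFor A d (c + u • Mv) x ∧ v = Mv ⬝ᵥ (x - d)}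

/-- `Ψ(v) ⊆ ℝ` (case `r = 1`). -/
def PsiR {l n : ℕ} (B : Matrix (Fin l) (Fin n) ℝ) (Mv c d : Fin n → ℝ) (v : ℝ) : Set ℝ :=
  {u | ∃ y : Fin n → ℝ, OptimalFor B c (d + v • Mv) y ∧ u = Mv ⬝ᵥ (y - c)}

/-- The set of parameters `v` for which the parametric KKT conditions (with dual
parameter `u`) admit a solution pair `(x̄, ȳ)`. -/
def KKTSet {m l n : ℕ} (A : Matrix (Fin m) (Fin n) ℝ) (B : Matrix (Fin l) (Fin n) ℝ)
    (Mv c d : Fin n → ℝ) (u : ℝ) : Set ℝ :=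
  {v | ∃ xb yb : Fin n → ℝ,
    A *ᵥ xb = A *ᵥ d ∧ Mv ⬝ᵥ xb = Mv ⬝ᵥ d + v ∧ 0 ≤ xb ∧
    B *ᵥ yb = B *ᵥ c ∧ Mv ⬝ᵥ yb = Mv ⬝ᵥ c + u ∧ 0 ≤ yb ∧
    xb ⬝ᵥ yb = 0}

/-- A transition point of `Θ_P`: a parameter `v ∈ Θ_P` for which `Ψ(v)` is not a
singleton. -/
def IsTransitionPoint {m l n : ℕ} (A : Matrix (Fin m) (Fin n) ℝ)
    (B : Matrix (Fin l) (Fin n) ℝ) (Mv c d : Fin n → ℝ) (v : ℝ) : Prop :=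
  v ∈ ThetaPR A Mv d ∧ ¬ ∃ u : ℝ, PsiR B Mv c d v = {u}

/-- An invariancy interval of `Θ_P`: a maximal open interval contained in `Θ_P`
on which `Ψ` is constant. -/
def IsInvariancyInterval {m l n : ℕ} (A : Matrix (Fin m) (Fin n) ℝ)
    (B : Matrix (Fin l) (Fin n) ℝ) (Mv c d : Fin n → ℝ) (a b : ℝ) : Prop :=
  (a < b ∧ Set.Ioo a b ⊆ ThetaPR A Mv d ∧
      ∀ v1 ∈ Set.Ioo a b, ∀ v2 ∈ Set.Ioo a b, PsiR B Mv c d v1 = PsiR B Mv c d v2) ∧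
    ∀ a' b' : ℝ, a' ≤ a → b ≤ b' →
      (a' < b' ∧ Set.Ioo a' b' ⊆ ThetaPR A Mv d ∧
        ∀ v1 ∈ Set.Ioo a' b', ∀ v2 ∈ Set.Ioo a' b', PsiR B Mv c d v1 = PsiR B Mv c d v2) →
      a' = a ∧ b' = b

lemma Set.finite_and_ncard_le_of_charge {α ι : Type*} [Fintype ι] (S : Set α) (P : α → ι → Prop)
    (hex : ∀ x ∈ S, ∃ i, P x i) (hinj : ∀ x ∈ S, ∀ x' ∈ S, ∀ i, P x i → P x' i → x = x') :
    S.Finite ∧ S.ncard ≤ Fintype.card ι := by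
  choose f hf using hex
  have hinj' : Function.Injective fun x : S => f x x.2 := fun x x' hxx' => by
    simp only at hxx'
    exact Subtype.ext (hinj x x.2 x' x'.2 _ (hf x x.2) (hxx' ▸ hf x' x'.2))
  have := Finite.of_injective _ hinj'
  exact ⟨S.toFinite, by
    simpa [Nat.card_coe_set_eq] using Nat.card_le_card_of_injective _ hinj'⟩

namespace SingleRowLP

variable {ι : Type*} [Fintype ι]

def Feasible (β : ι → ℝ) (b : ℝ) (y : ι → ℝ) : Prop := 0 ≤ y ∧ β ⬝ᵥ y = b

def IsOptimal (β : ι → ℝ) (b : ℝ) (g y : ι → ℝ) : Prop :=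
  Feasible β b y ∧ ∀ y', Feasible β b y' → g ⬝ᵥ y ≤ g ⬝ᵥ y'

def DualFeasible (β g : ι → ℝ) : Prop := ∃ s : ℝ, ∀ i, s * β i ≤ g i

lemma mul_dotProduct_le {β h y : ι → ℝ} {μ : ℝ} {E : Set ι} (hμ : ∀ i ∈ E, μ * β i ≤ h i)
    (hy : 0 ≤ y) (hyE : Function.support y ⊆ E) : μ * (β ⬝ᵥ y) ≤ h ⬝ᵥ y := by
  rw [dotProduct, dotProduct, Finset.mul_sum]
  refine Finset.sum_le_sum fun i _ => ?_
  by_cases hi : y i = 0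
  · simp [hi]
  · rw [← mul_assoc]
    exact mul_le_mul_of_nonneg_right (hμ i (hyE hi)) (hy i)

lemma dotProduct_eq_mul_of_support_subset {β h y : ι → ℝ} {μ : ℝ}
    (hy : Function.support y ⊆ {i | h i = μ * β i}) : h ⬝ᵥ y = μ * (β ⬝ᵥ y) := by
  rw [dotProduct, dotProduct, Finset.mul_sum]
  refine Finset.sum_congr rfl fun i _ => ?_
  by_cases hi : y i = 0
  · simp [hi]
  · rw [hy hi, mul_assoc]

lemma support_subset_of_dotProduct_eq {β g y : ι → ℝ} {ρ : ℝ} (hρ : ∀ i, ρ * β i ≤ g i)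
    (hy : 0 ≤ y) (hval : g ⬝ᵥ y = ρ * (β ⬝ᵥ y)) :
    Function.support y ⊆ {i | g i = ρ * β i} := by
  have hterm : ∀ i ∈ Finset.univ, 0 ≤ (g i - ρ * β i) * y i :=
    fun i _ => mul_nonneg (sub_nonneg.2 (hρ i)) (hy i)
  have hsum : ∑ i, (g i - ρ * β i) * y i = 0 := by
    simp only [sub_mul, Finset.sum_sub_distrib, mul_assoc, ← Finset.mul_sum]
    rw [← dotProduct, ← dotProduct, hval, sub_self]
  intro i hi
  have := (Finset.sum_eq_zero_iff_of_nonneg hterm).1 hsum i (Finset.mem_univ i)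
  exact sub_eq_zero.1 ((mul_eq_zero.1 this).resolve_right hi)

lemma dotProduct_nonneg_of_dualFeasible {β g z : ι → ℝ} (hg : DualFeasible β g) (hz : 0 ≤ z)
    (hβz : β ⬝ᵥ z = 0) : 0 ≤ g ⬝ᵥ z := by
  obtain ⟨s, hs⟩ := hg
  simpa [hβz] using mul_dotProduct_le (E := Set.univ) (fun i _ => hs i) hz (Set.subset_univ _)

lemma isOptimal_of_dotProduct_eq {β g y : ι → ℝ} {b ρ : ℝ} (hρ : ∀ i, ρ * β i ≤ g i)
    (hy : Feasible β b y) (hval : g ⬝ᵥ y = ρ * b) : IsOptimal β b g y :=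
  ⟨hy, fun _ hy' => hval ▸ hy'.2 ▸
    mul_dotProduct_le (E := Set.univ) (fun i _ => hρ i) hy'.1 (Set.subset_univ _)⟩

lemma isOptimal_zero {β g : ι → ℝ} (hg : DualFeasible β g) : IsOptimal β 0 g 0 := by
  obtain ⟨s, hs⟩ := hg
  exact isOptimal_of_dotProduct_eq hs ⟨le_rfl, dotProduct_zero β⟩ (by simp)

lemma IsOptimal.dotProduct_eq {β g y y' : ι → ℝ} {b : ℝ} (hy : IsOptimal β b g y)
    (hy' : IsOptimal β b g y') : g ⬝ᵥ y = g ⬝ᵥ y' :=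
  le_antisymm (hy.2 y' hy'.1) (hy'.2 y hy.1)

lemma feasible_single [DecidableEq ι] {β : ι → ℝ} {b : ℝ} {k : ι} (hk : 0 < β k * b) :
    Feasible β b (Pi.single k (b / β k)) := by
  have hβk := left_ne_zero_of_mul hk.ne'
  refine ⟨Pi.single_nonneg.2 ?_, by rw [dotProduct_single, mul_div_cancel₀ _ hβk]⟩
  rw [show b / β k = β k * b / β k ^ 2 by field_simp]
  positivity

lemma exists_ne_zero_and_mul_pos {β y : ι → ℝ} {b : ℝ} (hb : b ≠ 0) (hy : Feasible β b y) :
    ∃ i, y i ≠ 0 ∧ 0 < β i * b := by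
  have hsum : ∑ _i : ι, (0 : ℝ) < ∑ i, β i * b * y i := by
    simp only [Finset.sum_const_zero, mul_right_comm _ b, ← Finset.sum_mul]
    rw [← dotProduct, hy.2]
    exact mul_self_pos.2 hb
  obtain ⟨i, -, hi⟩ := Finset.exists_lt_of_sum_lt hsum
  exact ⟨i, fun h => by simp [h] at hi, pos_of_mul_pos_left hi (hy.1 i)⟩

lemma exists_ray_or_dual_vertex [DecidableEq ι] {β h y : ι → ℝ} {b : ℝ} {E : Set ι}
    (hb : b ≠ 0) (hy : Feasible β b y) (hyE : Function.support y ⊆ E) :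
    (∃ z, 0 ≤ z ∧ Function.support z ⊆ E ∧ β ⬝ᵥ z = 0 ∧ h ⬝ᵥ z < 0) ∨
      ∃ μ, (∀ i ∈ E, μ * β i ≤ h i) ∧ ∃ k ∈ E, 0 < β k * b ∧ h k = μ * β k := by
  classical
  let K := Finset.univ.filter fun k => k ∈ E ∧ 0 < β k * b
  obtain ⟨i₀, hi₀, hβi₀⟩ := exists_ne_zero_and_mul_pos hb hy
  obtain ⟨k, hkK, hmin⟩ := Finset.exists_min_image K (fun k => h k * (b / β k))
    ⟨i₀, by simp [K, hyE hi₀, hβi₀]⟩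
  obtain ⟨hkE, hk⟩ : k ∈ E ∧ 0 < β k * b := by simpa [K] using hkK
  have hβk := left_ne_zero_of_mul hk.ne'
  -- `k` is the cheapest vertex; if `h k / β k` is not a dual certificate on `E`, the violating
  -- index `i` is not a vertex index and `e_i - (β i / β k) e_k` is an improving ray.
  by_cases hall : ∀ i ∈ E, h k / β k * β i ≤ h i
  · exact Or.inr ⟨h k / β k, hall, k, hkE, hk, (div_mul_cancel₀ _ hβk).symm⟩
  push Not at hall
  obtain ⟨i, hiE, hi⟩ := hall
  have hβi : β i * b ≤ 0 := by
    by_contra! hpos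
    have hβi : β i ≠ 0 := by rintro h; simp [h] at hpos
    have hle := mul_le_mul_of_nonneg_right (hmin i (by simp [K, hiE, hpos]))
      (show 0 ≤ β i / b by rw [show β i / b = β i * b / b ^ 2 by field_simp]; positivity)
    have e₁ : h k * (b / β k) * (β i / b) = h k / β k * β i := by field_simp
    have e₂ : h i * (b / β i) * (β i / b) = h i := by field_simp
    linarith
  have ht : 0 ≤ -β i / β k := by
    rw [show -β i / β k = -(β i * b) / (β k * b) by field_simp]
    exact div_nonneg (neg_nonneg.2 hβi) hk.le
  left
  refine ⟨Pi.single i 1 + Pi.single k (-β i / β k),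
    add_nonneg (Pi.single_nonneg.2 zero_le_one) (Pi.single_nonneg.2 ht), ?_, ?_, ?_⟩
  · refine (Function.support_add _ _).trans (Set.union_subset ?_ ?_) <;>
      exact Pi.support_single_subset.trans (by simpa)
  · rw [dotProduct_add, dotProduct_single, dotProduct_single]
    field_simp
    ring
  · rw [dotProduct_add, dotProduct_single, dotProduct_single]
    have : h k * (-β i / β k) = -(h k / β k * β i) := by ring
    linarith

lemma exists_dual_optimal {β g y : ι → ℝ} {b : ℝ} (hg : DualFeasible β g)
    (hy : Feasible β b y) :
    ∃ ρ, (∀ i, ρ * β i ≤ g i) ∧ ∃ y₀, Feasible β b y₀ ∧ g ⬝ᵥ y₀ = ρ * b := by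
  classical
  by_cases hb : b = 0
  · obtain ⟨s, hs⟩ := hg
    exact ⟨s, hs, 0, ⟨le_rfl, by rw [dotProduct_zero, hb]⟩, by simp [hb]⟩
  rcases exists_ray_or_dual_vertex (h := g) hb hy (Set.subset_univ _) with
    ⟨z, hz, -, hβz, hgz⟩ | ⟨μ, hμ, k, -, hk, hgk⟩
  · exact absurd (dotProduct_nonneg_of_dualFeasible hg hz hβz) hgz.not_ge
  · refine ⟨μ, fun i => hμ i (Set.mem_univ i), _, feasible_single hk, ?_⟩
    have hβk := left_ne_zero_of_mul hk.ne'
    rw [dotProduct_single, hgk]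
    field_simp

lemma exists_isOptimal {β g y : ι → ℝ} {b : ℝ} (hg : DualFeasible β g) (hy : Feasible β b y) :
    ∃ y₀, IsOptimal β b g y₀ :=
  let ⟨_, hρ, y₀, hy₀, hval⟩ := exists_dual_optimal hg hy
  ⟨y₀, isOptimal_of_dotProduct_eq hρ hy₀ hval⟩

lemma isOptimal_iff_support_subset {β g y₀ y : ι → ℝ} {b ρ : ℝ} (hρ : ∀ i, ρ * β i ≤ g i)
    (hy₀ : Feasible β b y₀) (hval : g ⬝ᵥ y₀ = ρ * b) :
    IsOptimal β b g y ↔ Feasible β b y ∧ Function.support y ⊆ {i | g i = ρ * β i} := by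
  refine ⟨fun hy => ⟨hy.1, support_subset_of_dotProduct_eq hρ hy.1.1 ?_⟩,
    fun ⟨hy, hsupp⟩ => isOptimal_of_dotProduct_eq hρ hy ?_⟩
  · have hle := hy.2 y₀ hy₀
    have hge := mul_dotProduct_le (E := Set.univ) (fun i _ => hρ i) hy.1.1 (Set.subset_univ _)
    rw [hy.1.2] at hge ⊢
    linarith
  · rw [dotProduct_eq_mul_of_support_subset hsupp, hy.2]

lemma exists_ray_or_optimal_vertex [DecidableEq ι] {β g h y : ι → ℝ} {b : ℝ}
    (hg : DualFeasible β g) (hb : b ≠ 0) (hy : IsOptimal β b g y) :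
    (∃ z, 0 ≤ z ∧ β ⬝ᵥ z = 0 ∧ g ⬝ᵥ z = 0 ∧ 0 < h ⬝ᵥ z) ∨
      ∃ k, 0 < β k * b ∧ IsOptimal β b g (Pi.single k (b / β k)) ∧
        h ⬝ᵥ y ≤ h k * (b / β k) := by
  obtain ⟨ρ, hρ, y₀, hy₀, hval⟩ := exists_dual_optimal hg hy.1
  have hyE := ((isOptimal_iff_support_subset hρ hy₀ hval).1 hy).2
  rcases exists_ray_or_dual_vertex (h := -h) hb hy.1 hyE with
    ⟨z, hz, hzE, hβz, hhz⟩ | ⟨μ, hμ, k, hkE, hk, hhk⟩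
  · refine Or.inl ⟨z, hz, hβz, ?_, by simpa using hhz⟩
    rw [dotProduct_eq_mul_of_support_subset hzE, hβz, mul_zero]
  · refine Or.inr ⟨k, hk, (isOptimal_iff_support_subset hρ hy₀ hval).2
      ⟨feasible_single hk, Pi.support_single_subset.trans (by simpa)⟩, ?_⟩
    have hle := mul_dotProduct_le hμ hy.1.1 hyE
    have hβk := left_ne_zero_of_mul hk.ne'
    have hvertex : h k * (b / β k) = -(μ * b) := by
      rw [show h k = -(μ * β k) by simpa [neg_eq_iff_eq_neg] using hhk]
      field_simp
    rw [hy.1.2, neg_dotProduct] at hle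
    linarith

lemma exists_dotProduct_eq_vertex [Nonempty ι] {β g h y : ι → ℝ} {b : ℝ}
    (hg : DualFeasible β g) (hy : IsOptimal β b g y)
    (hconst : ∀ y', IsOptimal β b g y' → h ⬝ᵥ y' = h ⬝ᵥ y) : ∃ k, h ⬝ᵥ y = h k * (b / β k) := by
  classical
  by_cases hb : b = 0
  · subst hb
    exact ⟨Classical.arbitrary ι, by simp [← hconst 0 (isOptimal_zero hg)]⟩
  rcases exists_ray_or_optimal_vertex (h := h) hg hb hy with
    ⟨z, hz, hβz, hgz, hhz⟩ | ⟨k, -, hk, -⟩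
  · have hyz : IsOptimal β b g (y + z) :=
      ⟨⟨add_nonneg hy.1.1 hz, by rw [dotProduct_add, hy.1.2, hβz, add_zero]⟩,
        fun y' hy' => by rw [dotProduct_add, hgz, add_zero]; exact hy.2 y' hy'⟩
    have := hconst _ hyz
    rw [dotProduct_add] at this
    linarith
  · exact ⟨k, by rw [← hconst _ hk, dotProduct_single]⟩

lemma dotProduct_le_of_isOptimal_of_lt {β d Mv y y' : ι → ℝ} {b v v' : ℝ}
    (hy : IsOptimal β b (d + v • Mv) y) (hy' : IsOptimal β b (d + v' • Mv) y') (hv : v < v') :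
    Mv ⬝ᵥ y' ≤ Mv ⬝ᵥ y := by
  have h₁ := hy.2 y' hy'.1
  have h₂ := hy'.2 y hy.1
  simp only [add_dotProduct, smul_dotProduct, smul_eq_mul] at h₁ h₂
  nlinarith

def IsBreakpoint (β Mv d : ι → ℝ) (b v : ℝ) : Prop :=
  DualFeasible β (d + v • Mv) ∧ ∃ y₁ y₂, IsOptimal β b (d + v • Mv) y₁ ∧
    IsOptimal β b (d + v • Mv) y₂ ∧ Mv ⬝ᵥ y₁ < Mv ⬝ᵥ y₂

def IsOptimalRay (β g z : ι → ℝ) : Prop := 0 ≤ z ∧ β ⬝ᵥ z = 0 ∧ g ⬝ᵥ z = 0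

/-- A breakpoint is charged to the vertex `(b / β i) e_i` at the top of its range of optimal
`Mv`-values, or to an index of an optimal ray along which `Mv` is unbounded. Such a ray makes every
parameter on one side dual infeasible; ray charges avoid vertex indices, and when `b = 0` the sign
of `Mv i` separates the two directions. -/
def BreakpointCharge (β Mv d : ι → ℝ) (b v : ℝ) (i : ι) : Prop :=
  (0 < β i * b ∧ (∃ y, IsOptimal β b (d + v • Mv) y ∧ Mv ⬝ᵥ y = Mv i * (b / β i)) ∧
      ∃ y, IsOptimal β b (d + v • Mv) y ∧ Mv ⬝ᵥ y < Mv i * (b / β i)) ∨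
    ((∃ z, IsOptimalRay β (d + v • Mv) z ∧ 0 < Mv ⬝ᵥ z) ∧ β i * b ≤ 0 ∧ (b = 0 → 0 < Mv i)) ∨
    ((∃ z, IsOptimalRay β (d + v • Mv) z ∧ Mv ⬝ᵥ z < 0) ∧ b = 0 ∧ Mv i < 0)

lemma not_dualFeasible_of_isOptimalRay {β Mv d z : ι → ℝ} {v v' : ℝ}
    (hz : IsOptimalRay β (d + v • Mv) z) (hv' : (v' - v) * (Mv ⬝ᵥ z) < 0) :
    ¬ DualFeasible β (d + v' • Mv) := fun hg => by
  have hnonneg := dotProduct_nonneg_of_dualFeasible hg hz.1 hz.2.1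
  have hzero := hz.2.2
  simp only [add_dotProduct, smul_dotProduct, smul_eq_mul] at hnonneg hzero
  nlinarith

lemma exists_pos_of_dotProduct_pos {h y : ι → ℝ} (hy : 0 ≤ y) (hpos : 0 < h ⬝ᵥ y) :
    ∃ i, 0 < h i := by
  obtain ⟨i, -, hi⟩ := Finset.exists_lt_of_sum_lt (s := Finset.univ) (f := fun _ => 0)
    (g := fun i => h i * y i) (by simpa [dotProduct] using hpos)
  exact ⟨i, pos_of_mul_pos_left hi (hy i)⟩

lemma exists_ne_zero_and_mul_nonpos {β z : ι → ℝ} (b : ℝ) (hz : 0 ≤ z) (hz0 : z ≠ 0)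
    (hβz : β ⬝ᵥ z = 0) : ∃ i, z i ≠ 0 ∧ β i * b ≤ 0 := by
  by_contra! hpos
  obtain ⟨i₀, hi₀⟩ := Function.ne_iff.1 hz0
  have : 0 < ∑ i, β i * b * z i := Finset.sum_pos' (fun i _ => by
    by_cases hi : z i = 0
    · simp [hi]
    · exact mul_nonneg (hpos i hi).le (hz i))
    ⟨i₀, Finset.mem_univ _, mul_pos (hpos i₀ hi₀) ((hz i₀).lt_of_ne' hi₀)⟩
  simp only [mul_right_comm _ b, ← Finset.sum_mul] at this
  rw [← dotProduct, hβz, zero_mul] at this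
  exact this.false

lemma exists_breakpointCharge {β Mv d : ι → ℝ} {b v : ℝ} (hv : IsBreakpoint β Mv d b v) :
    ∃ i, BreakpointCharge β Mv d b v i := by
  classical
  obtain ⟨hg, y₁, y₂, hy₁, hy₂, hlt⟩ := hv
  by_cases hb : b = 0
  · -- the feasible region is a cone with optimal vertex `0`, so optimal solutions are rays
    subst hb
    have hzero := isOptimal_zero hg
    rcases lt_or_ge 0 (Mv ⬝ᵥ y₂) with hpos | hnonpos
    · obtain ⟨i, hi⟩ := exists_pos_of_dotProduct_pos hy₂.1.1 hpos
      refine ⟨i, Or.inr (Or.inl ⟨⟨y₂, ⟨hy₂.1.1, hy₂.1.2, ?_⟩, hpos⟩, by simp, fun _ => hi⟩)⟩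
      simpa using hy₂.dotProduct_eq hzero
    · obtain ⟨i, hi⟩ := exists_pos_of_dotProduct_pos (h := -Mv) hy₁.1.1 (by
        rw [neg_dotProduct]; linarith)
      refine ⟨i, Or.inr (Or.inr ⟨⟨y₁, ⟨hy₁.1.1, hy₁.1.2, ?_⟩, by linarith⟩, rfl,
        by simpa using hi⟩)⟩
      simpa using hy₁.dotProduct_eq hzero
  rcases exists_ray_or_optimal_vertex (h := Mv) hg hb hy₂ with
    ⟨z, hz, hβz, hgz, hMz⟩ | ⟨k, hk, hopt, hle⟩
  · obtain ⟨i, -, hi⟩ := exists_ne_zero_and_mul_nonpos b hz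
      (by rintro rfl; simp at hMz) hβz
    exact ⟨i, Or.inr (Or.inl ⟨⟨z, ⟨hz, hβz, hgz⟩, hMz⟩, hi, fun h => absurd h hb⟩)⟩
  · exact ⟨k, Or.inl ⟨hk, ⟨_, hopt, dotProduct_single _ _ _⟩, y₁, hy₁, hlt.trans_le hle⟩⟩

lemma BreakpointCharge.not_lt {β Mv d : ι → ℝ} {b v v' : ℝ} {i : ι}
    (hv : IsBreakpoint β Mv d b v) (hv' : IsBreakpoint β Mv d b v')
    (h : BreakpointCharge β Mv d b v i) (h' : BreakpointCharge β Mv d b v' i) : ¬ v < v' := by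
  intro hlt
  rcases h with ⟨hk, -, y, hy, hy_lt⟩ | ⟨⟨z, hz, hMz⟩, hβ, hMi⟩ | ⟨⟨z, hz, hMz⟩, hb, hMi⟩ <;>
    rcases h' with ⟨hk', ⟨y', hy', hy'_eq⟩, -⟩ | ⟨⟨z', hz', hMz'⟩, hβ', hMi'⟩ |
      ⟨⟨z', hz', hMz'⟩, hb', hMi'⟩
  · linarith [dotProduct_le_of_isOptimal_of_lt hy hy' hlt]
  · linarith
  · simp [hb'] at hk
  · linarith
  · exact not_dualFeasible_of_isOptimalRay hz' (by nlinarith) hv.1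
  · linarith [hMi hb']
  · simp [hb] at hk'
  · linarith [hMi' hb]
  · exact not_dualFeasible_of_isOptimalRay hz (by nlinarith) hv'.1

theorem setOf_isBreakpoint_finite_and_ncard_le (β Mv d : ι → ℝ) (b : ℝ) :
    {v | IsBreakpoint β Mv d b v}.Finite ∧
      {v | IsBreakpoint β Mv d b v}.ncard ≤ Fintype.card ι :=
  Set.finite_and_ncard_le_of_charge _ (BreakpointCharge β Mv d b)
    (fun _ hv => exists_breakpointCharge hv)
    (fun _ hv _ hv' _ h h' => le_antisymm (not_lt.1 (h'.not_lt hv' hv h))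
      (not_lt.1 (h.not_lt hv hv' h')))

end SingleRowLP

lemma mem_of_dotProduct_eq_zero_of_sup_eq_top {ι : Type*} [Fintype ι]
    {U V W : Submodule ℝ (ι → ℝ)} (hsum : U ⊔ V ⊔ W = ⊤)
    (hUV : ∀ u ∈ U, ∀ v ∈ V, u ⬝ᵥ v = 0) (hUW : ∀ u ∈ U, ∀ w ∈ W, u ⬝ᵥ w = 0)
    (hVW : ∀ v ∈ V, ∀ w ∈ W, v ⬝ᵥ w = 0) {x : ι → ℝ} (hxU : ∀ u ∈ U, u ⬝ᵥ x = 0)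
    (hxW : ∀ w ∈ W, w ⬝ᵥ x = 0) : x ∈ V := by
  obtain ⟨uv, huv, w, hw, rfl⟩ := Submodule.mem_sup.1 (hsum ▸ Submodule.mem_top : x ∈ U ⊔ V ⊔ W)
  obtain ⟨u, hu, v, hv, rfl⟩ := Submodule.mem_sup.1 huv
  have hu0 : u = 0 := by
    have := hxU u hu
    rw [dotProduct_add, dotProduct_add, hUV u hu v hv, hUW u hu w hw, add_zero, add_zero] at this
    exact dotProduct_self_eq_zero.1 this
  have hw0 : w = 0 := by
    have := hxW w hw
    rw [dotProduct_add, dotProduct_add, dotProduct_comm, hUW u hu w hw, dotProduct_comm,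
      hVW v hv w hw, zero_add, zero_add] at this
    exact dotProduct_self_eq_zero.1 this
  simpa [hu0, hw0] using hv

section ProjectionInterval

open SingleRowLP

variable {m n : ℕ} {A : Matrix (Fin m) (Fin n) ℝ} {B : Matrix (Fin 1) (Fin n) ℝ}
  {Mv c d : Fin n → ℝ}

lemma optimalFor_iff_isOptimal {g y : Fin n → ℝ} :
    OptimalFor B c g y ↔ IsOptimal (B 0) (B 0 ⬝ᵥ c) g y := by
  have hrow : ∀ y', B *ᵥ y' = B *ᵥ c ↔ B 0 ⬝ᵥ y' = B 0 ⬝ᵥ c := fun y' => by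
    rw [funext_iff, Fin.forall_fin_one]
    rfl
  simp only [OptimalFor, IsOptimal, Feasible, hrow]
  tauto

lemma mem_psiR_iff {u v : ℝ} : u ∈ PsiR B Mv c d v ↔
    ∃ y, IsOptimal (B 0) (B 0 ⬝ᵥ c) (d + v • Mv) y ∧ u = Mv ⬝ᵥ y - Mv ⬝ᵥ c := by
  simp only [PsiR, Set.mem_ofPred_eq, optimalFor_iff_isOptimal, dotProduct_sub]

lemma le_of_mem_psiR_of_lt {v v' u u' : ℝ} (hv : v < v') (hu : u ∈ PsiR B Mv c d v)
    (hu' : u' ∈ PsiR B Mv c d v') : u' ≤ u := by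
  obtain ⟨y, hy, rfl⟩ := mem_psiR_iff.1 hu
  obtain ⟨y', hy', rfl⟩ := mem_psiR_iff.1 hu'
  linarith [dotProduct_le_of_isOptimal_of_lt hy hy' hv]

lemma dualFeasible_of_mem_thetaPR (hA1 : Assumption1R A B Mv) (hA2 : Mv ⬝ᵥ Mv = 1) {v : ℝ}
    (hv : v ∈ ThetaPR A Mv d) : DualFeasible (B 0) (d + v • Mv) := by
  obtain ⟨hAB, hAM, hBM, hsum⟩ := hA1
  obtain ⟨x, hx, hAx, hMx⟩ := hv
  obtain ⟨q, hq⟩ : x - (d + v • Mv) ∈ LinearMap.range (Bᵀ).mulVecLin := by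
    refine mem_of_dotProduct_eq_zero_of_sup_eq_top hsum ?_ ?_ ?_ ?_ ?_
    · rintro _ ⟨p, rfl⟩ _ ⟨q, rfl⟩
      exact hAB p q
    · rintro _ ⟨p, rfl⟩ w hw
      obtain ⟨t, rfl⟩ := Submodule.mem_span_singleton.1 hw
      rw [mulVecLin_apply, dotProduct_smul, hAM p, smul_zero]
    · rintro _ ⟨q, rfl⟩ w hw
      obtain ⟨t, rfl⟩ := Submodule.mem_span_singleton.1 hw
      rw [mulVecLin_apply, dotProduct_smul, hBM q, smul_zero]
    · rintro _ ⟨p, rfl⟩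
      rw [mulVecLin_apply, dotProduct_sub, dotProduct_add, dotProduct_smul, hAM p,
        mulVec_transpose, ← dotProduct_mulVec, ← dotProduct_mulVec, hAx]
      simp
    · intro w hw
      obtain ⟨t, rfl⟩ := Submodule.mem_span_singleton.1 hw
      simp only [smul_dotProduct, dotProduct_sub, dotProduct_add, dotProduct_smul, hMx, hA2]
      simp only [smul_eq_mul]
      ring
  refine ⟨-q 0, fun i => ?_⟩
  have hqi := congrFun hq i
  simp [vecMul, dotProduct] at hqi ⊢
  linarith [show (0 : ℝ) ≤ x i from hx i]

lemma convex_thetaPR : Convex ℝ (ThetaPR A Mv d) := by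
  rintro v₁ ⟨x₁, hx₁, hAx₁, hMx₁⟩ v₂ ⟨x₂, hx₂, hAx₂, hMx₂⟩ a b ha hb hab
  refine ⟨a • x₁ + b • x₂, add_nonneg (smul_nonneg ha hx₁) (smul_nonneg hb hx₂), ?_, ?_⟩
  · rw [mulVec_add, mulVec_smul, mulVec_smul, hAx₁, hAx₂, ← add_smul, hab, one_smul]
  · rw [dotProduct_add, dotProduct_smul, dotProduct_smul, hMx₁, hMx₂, smul_eq_mul, smul_eq_mul,
      smul_eq_mul]
    linear_combination (Mv ⬝ᵥ d) * hab

lemma psiR_nonempty (hA1 : Assumption1R A B Mv) (hA2 : Mv ⬝ᵥ Mv = 1) (hc : 0 ≤ c) {v : ℝ}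
    (hv : v ∈ ThetaPR A Mv d) : (PsiR B Mv c d v).Nonempty := by
  obtain ⟨y, hy⟩ := exists_isOptimal (dualFeasible_of_mem_thetaPR hA1 hA2 hv)
    (⟨hc, rfl⟩ : Feasible (B 0) (B 0 ⬝ᵥ c) c)
  exact ⟨_, mem_psiR_iff.2 ⟨y, hy, rfl⟩⟩

lemma psiR_eq_singleton_of_le_of_le (hA1 : Assumption1R A B Mv) (hA2 : Mv ⬝ᵥ Mv = 1)
    (hc : 0 ≤ c) {v₁ v₂ w u : ℝ} (h₁ : PsiR B Mv c d v₁ = {u}) (h₂ : PsiR B Mv c d v₂ = {u})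
    (hv₁ : v₁ ≤ w) (hv₂ : w ≤ v₂) (hw : w ∈ ThetaPR A Mv d) : PsiR B Mv c d w = {u} := by
  rcases hv₁.eq_or_lt with rfl | hlt₁
  · exact h₁
  rcases hv₂.eq_or_lt with rfl | hlt₂
  · exact h₂
  have hmem : ∀ x ∈ PsiR B Mv c d w, x = u := fun x hx => le_antisymm
    (le_of_mem_psiR_of_lt hlt₁ (h₁ ▸ Set.mem_singleton u) hx)
    (le_of_mem_psiR_of_lt hlt₂ hx (h₂ ▸ Set.mem_singleton u))
  obtain ⟨x, hx⟩ := psiR_nonempty hA1 hA2 hc hw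
  exact Set.eq_singleton_iff_unique_mem.2 ⟨hmem x hx ▸ hx, hmem⟩

lemma IsTransitionPoint.isBreakpoint (hA1 : Assumption1R A B Mv) (hA2 : Mv ⬝ᵥ Mv = 1)
    (hc : 0 ≤ c) {v : ℝ} (hv : IsTransitionPoint A B Mv c d v) :
    IsBreakpoint (B 0) Mv d (B 0 ⬝ᵥ c) v := by
  obtain ⟨u, hu⟩ := psiR_nonempty hA1 hA2 hc hv.1
  have hns : ¬ (PsiR B Mv c d v).Subsingleton := fun hs => hv.2 ⟨u, hs.eq_singleton_of_mem hu⟩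
  obtain ⟨_, hu₁, _, hu₂, hne⟩ := Set.not_subsingleton_iff.1 hns
  obtain ⟨y₁, hy₁, rfl⟩ := mem_psiR_iff.1 hu₁
  obtain ⟨y₂, hy₂, rfl⟩ := mem_psiR_iff.1 hu₂
  have hg := dualFeasible_of_mem_thetaPR hA1 hA2 hv.1
  rcases hne.lt_or_gt with hlt | hlt
  exacts [⟨hg, y₁, y₂, hy₁, hy₂, by linarith⟩, ⟨hg, y₂, y₁, hy₂, hy₁, by linarith⟩]

lemma IsInvariancyInterval.exists_psiR_eq_singleton (hA1 : Assumption1R A B Mv)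
    (hA2 : Mv ⬝ᵥ Mv = 1) (hc : 0 ≤ c) {a b : ℝ} (h : IsInvariancyInterval A B Mv c d a b) :
    ∃ u, ∀ v ∈ Set.Ioo a b, PsiR B Mv c d v = {u} := by
  obtain ⟨⟨hab, hsub, hconst⟩, -⟩ := h
  have hv₀ : (a + b) / 2 ∈ Set.Ioo a b := ⟨by linarith, by linarith⟩
  have hv₁ : (3 * a + b) / 4 ∈ Set.Ioo a b := ⟨by linarith, by linarith⟩
  have hlt : (3 * a + b) / 4 < (a + b) / 2 := by linarith
  have heq := hconst _ hv₁ _ hv₀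
  obtain ⟨u, hu⟩ := psiR_nonempty hA1 hA2 hc (hsub hv₀)
  have hsingle : PsiR B Mv c d ((a + b) / 2) = {u} :=
    Set.eq_singleton_iff_unique_mem.2 ⟨hu, fun u' hu' => le_antisymm
      (le_of_mem_psiR_of_lt hlt (heq ▸ hu) hu') (le_of_mem_psiR_of_lt hlt (heq ▸ hu') hu)⟩
  exact ⟨u, fun v hv => (hconst v hv _ hv₀).trans hsingle⟩

lemma mem_Ioo_or_mem_Ioo_or_mem_uIcc {a b a' b' w : ℝ} (hab : a < b) (hab' : a' < b')
    (hw : w ∈ Set.Ioo (min a a') (max b b')) :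
    w ∈ Set.Ioo a b ∨ w ∈ Set.Ioo a' b' ∨ w ∈ Set.uIcc ((a + b) / 2) ((a' + b') / 2) := by
  simp only [Set.mem_Ioo, Set.mem_uIcc, min_lt_iff, lt_max_iff] at hw ⊢
  grind

lemma IsInvariancyInterval.eq_of_psiR_eq_singleton (hA1 : Assumption1R A B Mv)
    (hA2 : Mv ⬝ᵥ Mv = 1) (hc : 0 ≤ c) {a b a' b' u : ℝ}
    (h : IsInvariancyInterval A B Mv c d a b) (h' : IsInvariancyInterval A B Mv c d a' b')
    (hu : ∀ v ∈ Set.Ioo a b, PsiR B Mv c d v = {u})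
    (hu' : ∀ v ∈ Set.Ioo a' b', PsiR B Mv c d v = {u}) : a = a' ∧ b = b' := by
  have hm : (a + b) / 2 ∈ Set.Ioo a b := ⟨by linarith [h.1.1], by linarith [h.1.1]⟩
  have hm' : (a' + b') / 2 ∈ Set.Ioo a' b' := ⟨by linarith [h'.1.1], by linarith [h'.1.1]⟩
  have hhull : ∀ w ∈ Set.Ioo (min a a') (max b b'),
      w ∈ ThetaPR A Mv d ∧ PsiR B Mv c d w = {u} := by
    intro w hw
    rcases mem_Ioo_or_mem_Ioo_or_mem_uIcc h.1.1 h'.1.1 hw with hw | hw | hw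
    · exact ⟨h.1.2.1 hw, hu w hw⟩
    · exact ⟨h'.1.2.1 hw, hu' w hw⟩
    have hwΘ := convex_thetaPR.ordConnected.uIcc_subset (h.1.2.1 hm) (h'.1.2.1 hm') hw
    refine ⟨hwΘ, ?_⟩
    rcases Set.mem_uIcc.1 hw with ⟨h₁, h₂⟩ | ⟨h₁, h₂⟩
    · exact psiR_eq_singleton_of_le_of_le hA1 hA2 hc (hu _ hm) (hu' _ hm') h₁ h₂ hwΘ
    · exact psiR_eq_singleton_of_le_of_le hA1 hA2 hc (hu' _ hm') (hu _ hm) h₁ h₂ hwΘ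
  have hJ : min a a' < max b b' ∧ Set.Ioo (min a a') (max b b') ⊆ ThetaPR A Mv d ∧
      ∀ v₁ ∈ Set.Ioo (min a a') (max b b'), ∀ v₂ ∈ Set.Ioo (min a a') (max b b'),
        PsiR B Mv c d v₁ = PsiR B Mv c d v₂ :=
    ⟨(min_le_left a a').trans_lt (h.1.1.trans_le (le_max_left b b')),
      fun w hw => (hhull w hw).1, fun v₁ h₁ v₂ h₂ => (hhull v₁ h₁).2.trans (hhull v₂ h₂).2.symm⟩
  obtain ⟨ha, hb⟩ := h.2 _ _ (min_le_left a a') (le_max_left b b') hJ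
  obtain ⟨ha', hb'⟩ := h'.2 _ _ (min_le_right a a') (le_max_right b b') hJ
  exact ⟨ha.symm.trans ha', hb.symm.trans hb'⟩

lemma IsInvariancyInterval.exists_psiR_eq_vertex (hA1 : Assumption1R A B Mv)
    (hA2 : Mv ⬝ᵥ Mv = 1) (hc : 0 ≤ c) {a b : ℝ} (h : IsInvariancyInterval A B Mv c d a b) :
    ∃ k, ∀ v ∈ Set.Ioo a b, PsiR B Mv c d v = {Mv k * (B 0 ⬝ᵥ c / B 0 k) - Mv ⬝ᵥ c} := by
  obtain ⟨u, hu⟩ := h.exists_psiR_eq_singleton hA1 hA2 hc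
  have hm : (a + b) / 2 ∈ Set.Ioo a b := ⟨by linarith [h.1.1], by linarith [h.1.1]⟩
  have hval : ∀ y, IsOptimal (B 0) (B 0 ⬝ᵥ c) (d + ((a + b) / 2) • Mv) y →
      Mv ⬝ᵥ y = u + Mv ⬝ᵥ c := fun y hy => by
    have := hu _ hm ▸ mem_psiR_iff.2 ⟨y, hy, rfl⟩
    rw [Set.mem_singleton_iff] at this
    linarith
  have hg := dualFeasible_of_mem_thetaPR hA1 hA2 (h.1.2.1 hm)
  obtain ⟨y, hy⟩ := exists_isOptimal hg (⟨hc, rfl⟩ : Feasible (B 0) (B 0 ⬝ᵥ c) c)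
  have : Nonempty (Fin n) :=
    ⟨⟨0, Nat.pos_of_ne_zero fun hn => by subst hn; simp [dotProduct] at hA2⟩⟩
  obtain ⟨k, hk⟩ := exists_dotProduct_eq_vertex hg hy fun y' hy' =>
    (hval y' hy').trans (hval y hy).symm
  exact ⟨k, fun v hv => by rw [hu v hv, ← hk, hval y hy, add_sub_cancel_right]⟩

end ProjectionInterval

open SingleRowLP in
theorem ThetaP_at_most_n_general {m n : ℕ}
    (A : Matrix (Fin m) (Fin n) ℝ) (B : Matrix (Fin 1) (Fin n) ℝ)
    (Mv c d : Fin n → ℝ) (hc : 0 ≤ c)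
    (hA1 : Assumption1R A B Mv) (hA2 : Mv ⬝ᵥ Mv = 1) :
    ({v : ℝ | IsTransitionPoint A B Mv c d v}.Finite ∧
        {v : ℝ | IsTransitionPoint A B Mv c d v}.ncard ≤ n) ∧
      ({p : ℝ × ℝ | IsInvariancyInterval A B Mv c d p.1 p.2}.Finite ∧
        {p : ℝ × ℝ | IsInvariancyInterval A B Mv c d p.1 p.2}.ncard ≤ n) := by
  have hsub : {v | IsTransitionPoint A B Mv c d v} ⊆ {v | IsBreakpoint (B 0) Mv d (B 0 ⬝ᵥ c) v} :=
    fun v hv => hv.isBreakpoint hA1 hA2 hc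
  obtain ⟨hfin, hcard⟩ := setOf_isBreakpoint_finite_and_ncard_le (B 0) Mv d (B 0 ⬝ᵥ c)
  refine ⟨⟨hfin.subset hsub, (Set.ncard_le_ncard hsub hfin).trans (by simpa using hcard)⟩, ?_⟩
  simpa using Set.finite_and_ncard_le_of_charge _
    (fun p k => ∀ v ∈ Set.Ioo p.1 p.2, PsiR B Mv c d v = {Mv k * (B 0 ⬝ᵥ c / B 0 k) - Mv ⬝ᵥ c})
    (fun p hp => hp.exists_psiR_eq_vertex hA1 hA2 hc)
    (fun p hp p' hp' _ hk hk' => Prod.ext_iff.2 (hp.eq_of_psiR_eq_singleton hA1 hA2 hc hp' hk hk'))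

/-- With `l = r = 1`, the primal projection interval `Θ_P` contains at most `n`
transition points and at most `n` invariancy intervals. -/
theorem ThetaP_at_most_n {m n : ℕ}
    (A : Matrix (Fin m) (Fin n) ℝ) (B : Matrix (Fin 1) (Fin n) ℝ)
    (Mv c d : Fin n → ℝ) (hd : 0 ≤ d) (hc : 0 ≤ c)
    (hA1 : Assumption1R A B Mv) (hA2 : Mv ⬝ᵥ Mv = 1) :
    ({v : ℝ | IsTransitionPoint A B Mv c d v}.Finite ∧
        {v : ℝ | IsTransitionPoint A B Mv c d v}.ncard ≤ n) ∧
      ({p : ℝ × ℝ | IsInvariancyInterval A B Mv c d p.1 p.2}.Finite ∧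
        {p : ℝ × ℝ | IsInvariancyInterval A B Mv c d p.1 p.2}.ncard ≤ n) :=
  ThetaP_at_most_n_general A B Mv c d hc hA1 hA2
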